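/- arXiv:2508.07188 — 2 statements merged into one kernel-verified Lean document; each statement's English description precedes it below -/
import Mathlib

section
/- Let σ be a positive semidefinite d×d complex matrix and let U, V be d×d unitary matrices. Then Re Tr[(U σ Uᴴ)(V σ Vᴴ)] ≤ Re Tr(σ²). (Supporting lemma: the cross terms appearing in the purity computation of Theorem 1's proof are each bounded by the purity of σ.) -/
/-! With `A = U σ Uᴴ` and `B = V σ Vᴴ` Hermitian, expanding the squared Frobenius norm gives
`0 ≤ Re Tr[(A - B)ᴴ (A - B)] = Re Tr(A²) + Re Tr(B²) - 2 Re Tr(AB)`, and unitary conjugation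
leaves `Tr(A²) = Tr(B²) = Tr(σ²)`. -/

open Matrix ComplexOrder

namespace Matrix

variable {n 𝕜 : Type*} [Fintype n] [RCLike 𝕜]

lemma two_mul_re_trace_mul_le_of_isHermitian {A B : Matrix n n 𝕜} (hA : A.IsHermitian)
    (hB : B.IsHermitian) :
    2 * RCLike.re (A * B).trace ≤ RCLike.re (A * A).trace + RCLike.re (B * B).trace := by
  have hsq : 0 ≤ RCLike.re ((A - B)ᴴ * (A - B)).trace :=
    (RCLike.nonneg_iff.mp (posSemidef_conjTranspose_mul_self (A - B)).trace_nonneg).1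
  have hexpand : (A - B)ᴴ * (A - B) = A * A - A * B - B * A + B * B := by
    rw [conjTranspose_sub, hA.eq, hB.eq]
    noncomm_ring
  rw [hexpand, trace_add, trace_sub, trace_sub, trace_mul_comm B A] at hsq
  simp only [map_add, map_sub] at hsq
  linarith

variable [DecidableEq n] {U : Matrix n n 𝕜}

lemma trace_mul_mul_conjTranspose_of_mem_unitaryGroup (hU : U ∈ unitaryGroup n 𝕜)
    (A : Matrix n n 𝕜) : (U * A * Uᴴ).trace = A.trace := by
  have hUU : Uᴴ * U = 1 := hU.1
  rw [trace_mul_cycle, hUU, one_mul]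

lemma mul_mul_conjTranspose_mul_of_mem_unitaryGroup (hU : U ∈ unitaryGroup n 𝕜)
    (A B : Matrix n n 𝕜) : U * A * Uᴴ * (U * B * Uᴴ) = U * (A * B) * Uᴴ := by
  have hUU : Uᴴ * U = 1 := hU.1
  simp only [mul_assoc]
  rw [← mul_assoc Uᴴ U, hUU, one_mul]

end Matrix

/-- Cross-term bound: for a positive semidefinite matrix `σ` and unitaries
`U, V`, we have `Re Tr[(U σ Uᴴ)(V σ Vᴴ)] ≤ Re Tr(σ²)`. -/
theorem crossTerm_le_purity
    {d : ℕ} (σ : Matrix (Fin d) (Fin d) ℂ) (hσ : σ.PosSemidef)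
    (U V : Matrix (Fin d) (Fin d) ℂ)
    (hU : U ∈ Matrix.unitaryGroup (Fin d) ℂ)
    (hV : V ∈ Matrix.unitaryGroup (Fin d) ℂ) :
    (((U * σ * Uᴴ) * (V * σ * Vᴴ)).trace).re ≤ ((σ * σ).trace).re := by
  have h := two_mul_re_trace_mul_le_of_isHermitian
    (isHermitian_mul_mul_conjTranspose U hσ.1) (isHermitian_mul_mul_conjTranspose V hσ.1)
  simp only [mul_mul_conjTranspose_mul_of_mem_unitaryGroup, hU, hV,
    trace_mul_mul_conjTranspose_of_mem_unitaryGroup, RCLike.re_to_complex] at h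
  linarith
end

section
/- Let U be the 8×8 matrix on three qubits given by U = |000⟩⟨000| + (1/√3)|000⟩⟨100| − (1/√3)|001⟩⟨010| + (1/√3)|001⟩⟨100| − (1/√3)|010⟩⟨001| + (1/√3)|010⟩⟨011| + (1/√3)|010⟩⟨100| + |011⟩⟨101| + (1/√3)|100⟩⟨010| − (1/√3)|100⟩⟨011| + (1/√3)|100⟩⟨100| + |101⟩⟨110| + (1/√6)|110⟩⟨001| + (1/√6)|110⟩⟨010| + (1/√6)|110⟩⟨011| + (1/√2)|110⟩⟨111| + (1/√6)|111⟩⟨001| + (1/√6)|111⟩⟨010| + (1/√6)|111⟩⟨011| − (1/√2)|111⟩⟨111| (the unitary creating the W state (|001⟩+|010⟩+|100⟩)/√3 from |100⟩), regard qubits 1 and 2 as the system S and qubit 3 as the environment E, and let σ₁ = |100⟩⟨100| and σ₂ = |ψ⟩⟨ψ| with |ψ⟩ = (|100⟩ + |011⟩)/√2. Set ρ₁ = U σ₁ Uᴴ and ρ₂ = U σ₂ Uᴴ. Then the system trace distance strictly increases while the environment trace distance strictly decreases: (1/2)‖Tr_E ρ₁ − Tr_E ρ₂‖₁ > (1/2)‖Tr_E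 σ₁ − Tr_E σ₂‖₁ = 1/2, and (1/2)‖Tr_S ρ₁ − Tr_S ρ₂‖₁ < (1/2)‖Tr_S σ₁ − Tr_S σ₂‖₁ = 1/2. (Numerical example 3: for the W-state-creating unitary, the system channel is P-indivisible while the environment channel is P-divisible, even though the joint evolution is unitary.) -/
open Matrix ComplexOrder BigOperators

/-- The trace norm of a complex square matrix. -/
noncomputable def traceNorm {n : Type*} [Fintype n] [DecidableEq n]
    (A : Matrix n n ℂ) : ℝ :=
  (((Matrix.posSemidef_conjTranspose_mul_self A).1.eigenvectorUnitary.1 *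
      diagonal (((↑) : ℝ → ℂ) ∘ (√·) ∘ (Matrix.posSemidef_conjTranspose_mul_self A).1.eigenvalues) *
      (star (Matrix.posSemidef_conjTranspose_mul_self A).1.eigenvectorUnitary : Matrix n n ℂ)).trace).re

/-- Partial trace over the second (environment) factor. -/
noncomputable def trE {dS dE : Type*} [Fintype dE]
    (M : Matrix (dS × dE) (dS × dE) ℂ) : Matrix dS dS ℂ :=
  fun s s' => ∑ e, M (s, e) (s', e)

/-- Partial trace over the first (system) factor. -/
noncomputable def trS {dS dE : Type*} [Fintype dS]
    (M : Matrix (dS × dE) (dS × dE) ℂ) : Matrix dE dE ℂ :=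
  fun e e' => ∑ s, M (s, e) (s, e')

/-- The matrix unit `|abc⟩⟨a'b'c'|` on three qubits grouped as `(q₁ × q₂) × q₃`. -/
def E (x y : (Fin 2 × Fin 2) × Fin 2) :
    Matrix ((Fin 2 × Fin 2) × Fin 2) ((Fin 2 × Fin 2) × Fin 2) ℂ :=
  Matrix.single x y 1

noncomputable def c3 : ℂ := ((1 / Real.sqrt 3 : ℝ) : ℂ)
noncomputable def c6 : ℂ := ((1 / Real.sqrt 6 : ℝ) : ℂ)
noncomputable def c2 : ℂ := ((1 / Real.sqrt 2 : ℝ) : ℂ)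

/-- The unitary creating the W state `(|001⟩+|010⟩+|100⟩)/√3` from `|100⟩`. -/
noncomputable def Wunitary :
    Matrix ((Fin 2 × Fin 2) × Fin 2) ((Fin 2 × Fin 2) × Fin 2) ℂ :=
  E ((0, 0), 0) ((0, 0), 0) + c3 • E ((0, 0), 0) ((1, 0), 0)
    - c3 • E ((0, 0), 1) ((0, 1), 0) + c3 • E ((0, 0), 1) ((1, 0), 0)
    - c3 • E ((0, 1), 0) ((0, 0), 1) + c3 • E ((0, 1), 0) ((0, 1), 1)
    + c3 • E ((0, 1), 0) ((1, 0), 0) + E ((0, 1), 1) ((1, 0), 1)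
    + c3 • E ((1, 0), 0) ((0, 1), 0) - c3 • E ((1, 0), 0) ((0, 1), 1)
    + c3 • E ((1, 0), 0) ((1, 0), 0) + E ((1, 0), 1) ((1, 1), 0)
    + c6 • E ((1, 1), 0) ((0, 0), 1) + c6 • E ((1, 1), 0) ((0, 1), 0)
    + c6 • E ((1, 1), 0) ((0, 1), 1) + c2 • E ((1, 1), 0) ((1, 1), 1)
    + c6 • E ((1, 1), 1) ((0, 0), 1) + c6 • E ((1, 1), 1) ((0, 1), 0)
    + c6 • E ((1, 1), 1) ((0, 1), 1) - c2 • E ((1, 1), 1) ((1, 1), 1)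

/-- The vector `|ψ⟩ = (|100⟩ + |011⟩)/√2`. -/
noncomputable def ψvec : (Fin 2 × Fin 2) × Fin 2 → ℂ :=
  fun x => if x = ((1, 0), 0) ∨ x = ((0, 1), 1) then c2 else 0

/-!
The trace norm is `∑ √λᵢ` over the eigenvalues `λᵢ` of `AᴴA`; it equals the trace of any
positive square root of `AᴴA`, and, since `(∑ √λᵢ)² ≥ ∑ λᵢ = ∑ |Aᵢⱼ|²`, it dominates the
Frobenius norm.

Both inputs and both outputs are pure states. The differences of the input marginals are
diagonal with entries `±1/2`, so both input distances are `1/2`. After the evolution the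
environment difference is the positive rank-one matrix with all entries `1/12`, of trace norm
`1/6`, while the system difference has squared Frobenius norm `37/36 > 1`.
-/

section TraceNorm

variable {n : Type*} [Fintype n] [DecidableEq n]

lemma traceNorm_eq_sum_sqrt_eigenvalues (A : Matrix n n ℂ) :
    traceNorm A = ∑ i, √((posSemidef_conjTranspose_mul_self A).1.eigenvalues i) := by
  set hH := (posSemidef_conjTranspose_mul_self A).1
  have hU : (star hH.eigenvectorUnitary : Matrix n n ℂ) * hH.eigenvectorUnitary = 1 :=
    Unitary.coe_star_mul_self _
  rw [traceNorm, trace_mul_cycle, hU, Matrix.one_mul, trace_diagonal, Complex.re_sum]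
  simp

lemma traceNorm_nonneg (A : Matrix n n ℂ) : 0 ≤ traceNorm A := by
  rw [traceNorm_eq_sum_sqrt_eigenvalues]
  exact Finset.sum_nonneg fun i _ => Real.sqrt_nonneg _

lemma re_trace_conjTranspose_mul_self_le_traceNorm_sq (A : Matrix n n ℂ) :
    (Aᴴ * A).trace.re ≤ traceNorm A ^ 2 := by
  have hA := posSemidef_conjTranspose_mul_self A
  rw [traceNorm_eq_sum_sqrt_eigenvalues, hA.1.trace_eq_sum_eigenvalues, Complex.re_sum]
  calc ∑ i, ((hA.1.eigenvalues i : ℂ)).re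
      = ∑ i, √(hA.1.eigenvalues i) ^ 2 := by
        simp [Real.sq_sqrt (hA.eigenvalues_nonneg _)]
    _ ≤ _ := Finset.sum_sq_le_sq_sum_of_nonneg fun i _ => Real.sqrt_nonneg _

lemma sum_normSq_le_traceNorm_sq (A : Matrix n n ℂ) :
    ∑ i, ∑ j, Complex.normSq (A i j) ≤ traceNorm A ^ 2 := by
  refine le_of_eq_of_le ?_ (re_trace_conjTranspose_mul_self_le_traceNorm_sq A)
  rw [trace, Complex.re_sum, Finset.sum_comm]
  refine Finset.sum_congr rfl fun j _ => ?_
  simp [mul_apply, Complex.re_sum, ← Complex.normSq_eq_conj_mul_self]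

open scoped MatrixOrder in
lemma traceNorm_eq_re_trace_of_sq_eq {A B : Matrix n n ℂ} (hB : B.PosSemidef)
    (h : B ^ 2 = Aᴴ * A) : traceNorm A = B.trace.re := by
  have hH := posSemidef_conjTranspose_mul_self A
  have hsqrt : traceNorm A = (CFC.sqrt (Aᴴ * A)).trace.re := by
    rw [CFC.sqrt_eq_real_sqrt _ hH.nonneg, cfcₙ_eq_cfc, hH.1.cfc_eq]
    rfl
  rw [hsqrt, ← h, CFC.sqrt_sq B hB.nonneg]

lemma traceNorm_of_posSemidef {A : Matrix n n ℂ} (hA : A.PosSemidef) :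
    traceNorm A = A.trace.re :=
  traceNorm_eq_re_trace_of_sq_eq hA (by rw [hA.1.eq, sq])

lemma traceNorm_diagonal (d : n → ℂ) : traceNorm (diagonal d) = ∑ i, ‖d i‖ := by
  have hB : (diagonal fun i => (‖d i‖ : ℂ)).PosSemidef :=
    PosSemidef.diagonal fun i => by simp
  rw [traceNorm_eq_re_trace_of_sq_eq hB, trace_diagonal, Complex.re_sum]
  · simp
  · rw [diagonal_pow, diagonal_conjTranspose, diagonal_mul_diagonal]
    congr 1; ext i
    simp [Complex.conj_mul']

lemma traceNorm_vecMulVec_self_star (v : n → ℂ) :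
    traceNorm (vecMulVec v (star v)) = ∑ i, Complex.normSq (v i) := by
  rw [traceNorm_of_posSemidef (posSemidef_vecMulVec_self_star v), trace_vecMulVec,
    dotProduct, Complex.re_sum]
  simp [Complex.mul_conj]

end TraceNorm

lemma single_self_one_eq_vecMulVec {R n : Type*} [Semiring R] [StarRing R] [DecidableEq n]
    (i : n) : single i i (1 : R) = vecMulVec (Pi.single i 1) (star (Pi.single i 1)) := by
  rw [single_eq_single_vecMulVec_single, ← Pi.single_star, star_one]

lemma mul_vecMulVec_star_mul_conjTranspose {m n : Type*} [Fintype n] (M : Matrix m n ℂ)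
    (v : n → ℂ) : M * vecMulVec v (star v) * Mᴴ = vecMulVec (M *ᵥ v) (star (M *ᵥ v)) := by
  rw [mul_vecMulVec, vecMulVec_mul, vecMul_conjTranspose, star_star]

lemma c2_sq : c2 ^ 2 = 1 / 2 := by
  rw [c2]; norm_cast; rw [div_pow, Real.sq_sqrt (by norm_num)]; norm_num

lemma c3_sq : c3 ^ 2 = 1 / 3 := by
  rw [c3]; norm_cast; rw [div_pow, Real.sq_sqrt (by norm_num)]; norm_num

lemma c6_eq : c6 = c2 * c3 := by
  rw [c6, c2, c3]; norm_cast
  rw [div_mul_div_comm, one_mul, ← Real.sqrt_mul (by norm_num)]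
  norm_num

@[simp] lemma conj_c2 : starRingEnd ℂ c2 = c2 := Complex.conj_ofReal _

@[simp] lemma conj_c3 : starRingEnd ℂ c3 = c3 := Complex.conj_ofReal _

lemma normSq_c2 : Complex.normSq c2 = 1 / 2 := by
  rw [c2, Complex.normSq_ofReal, ← sq, div_pow, Real.sq_sqrt (by norm_num)]; norm_num

lemma normSq_c3 : Complex.normSq c3 = 1 / 3 := by
  rw [c3, Complex.normSq_ofReal, ← sq, div_pow, Real.sq_sqrt (by norm_num)]; norm_num

noncomputable def ket100 : (Fin 2 × Fin 2) × Fin 2 → ℂ := Pi.single ((1, 0), 0) 1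

-- The term `|000⟩⟨100|` of `Wunitary` gives `φ₁` a `|000⟩` component: it is not the W state.
noncomputable def φ₁ : (Fin 2 × Fin 2) × Fin 2 → ℂ := fun x =>
  if x = ((0, 0), 0) ∨ x = ((0, 0), 1) ∨ x = ((0, 1), 0) ∨ x = ((1, 0), 0) then c3 else 0

noncomputable def φ₂ : (Fin 2 × Fin 2) × Fin 2 → ℂ := fun x =>
  if x = ((0, 0), 0) ∨ x = ((0, 0), 1) then c2 * c3 else
  if x = ((0, 1), 0) then 2 * c2 * c3 else
  if x = ((1, 1), 0) ∨ x = ((1, 1), 1) then c3 / 2 else 0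

lemma Wunitary_mulVec_ket100 : Wunitary *ᵥ ket100 = φ₁ := by
  rw [ket100, mulVec_single_one]
  ext ⟨⟨a, b⟩, c⟩
  fin_cases a <;> fin_cases b <;> fin_cases c <;>
    simp [Wunitary, E, φ₁, single, Prod.ext_iff]

lemma Wunitary_mulVec_ψvec : Wunitary *ᵥ ψvec = φ₂ := by
  ext ⟨⟨a, b⟩, c⟩
  fin_cases a <;> fin_cases b <;> fin_cases c <;>
    simp [Wunitary, E, φ₂, ψvec, mulVec, dotProduct, single, Fintype.sum_prod_type,
      Fin.sum_univ_two, Prod.ext_iff, c6_eq] <;> ring_nf <;> simp [c2_sq] <;> ring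

lemma trE_sub_trE_ket100_ψvec :
    trE (vecMulVec ket100 (star ket100)) - trE (vecMulVec ψvec (star ψvec)) =
      diagonal fun p => !![0, -1 / 2; 1 / 2, 0] p.1 p.2 := by
  ext ⟨a, b⟩ ⟨a', b'⟩
  fin_cases a <;> fin_cases b <;> fin_cases a' <;> fin_cases b' <;>
    simp [trE, ket100, ψvec, vecMulVec_apply, Pi.single_apply, Prod.ext_iff, ← sq, c2_sq] <;>
    norm_num

lemma trS_sub_trS_ket100_ψvec :
    trS (vecMulVec ket100 (star ket100)) - trS (vecMulVec ψvec (star ψvec)) =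
      diagonal ![1 / 2, -1 / 2] := by
  ext e e'
  fin_cases e <;> fin_cases e' <;>
    simp [trS, ket100, ψvec, vecMulVec_apply, Pi.single_apply, Fintype.sum_prod_type,
      Fin.sum_univ_two, Prod.ext_iff, ← sq, c2_sq, -Finset.sum_boole] <;>
    norm_num

lemma trE_sub_trE_φ :
    trE (vecMulVec φ₁ (star φ₁)) - trE (vecMulVec φ₂ (star φ₂)) =
      (1 / 3 : ℂ) • (!![1, 0, 1, -c2; 0, -1, 1, -c2; 1, 1, 1, 0; -c2, -c2, 0, -1 / 2]
        |>.submatrix finProdFinEquiv finProdFinEquiv) := by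
  ext ⟨a, b⟩ ⟨a', b'⟩
  fin_cases a <;> fin_cases b <;> fin_cases a' <;> fin_cases b' <;>
    simp [trE, φ₁, φ₂, vecMulVec_apply, Fin.sum_univ_two, Prod.ext_iff, finProdFinEquiv,
      Complex.conj_ofNat] <;>
    ring_nf <;> simp [c2_sq, c3_sq] <;> ring

lemma trS_sub_trS_φ :
    trS (vecMulVec φ₁ (star φ₁)) - trS (vecMulVec φ₂ (star φ₂)) =
      vecMulVec (fun _ => c3 / 2) (star fun _ => c3 / 2) := by
  ext e e'
  fin_cases e <;> fin_cases e' <;>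
    simp [trS, φ₁, φ₂, vecMulVec_apply, Fintype.sum_prod_type, Fin.sum_univ_two,
      Prod.ext_iff, Complex.conj_ofNat] <;>
    ring_nf <;> simp [c2_sq, c3_sq] <;> norm_num

lemma traceNorm_trE_sub_trE_ket100_ψvec :
    traceNorm (trE (vecMulVec ket100 (star ket100)) - trE (vecMulVec ψvec (star ψvec))) = 1 := by
  rw [trE_sub_trE_ket100_ψvec, traceNorm_diagonal]
  norm_num [Fintype.sum_prod_type]

lemma traceNorm_trS_sub_trS_ket100_ψvec :
    traceNorm (trS (vecMulVec ket100 (star ket100)) - trS (vecMulVec ψvec (star ψvec))) = 1 := by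
  rw [trS_sub_trS_ket100_ψvec, traceNorm_diagonal]
  norm_num

lemma one_lt_traceNorm_trE_sub_trE_φ :
    1 < traceNorm (trE (vecMulVec φ₁ (star φ₁)) - trE (vecMulVec φ₂ (star φ₂))) := by
  have hfrobenius : 37 / 36 ≤
      traceNorm (trE (vecMulVec φ₁ (star φ₁)) - trE (vecMulVec φ₂ (star φ₂))) ^ 2 := by
    refine le_of_eq_of_le ?_ (sum_normSq_le_traceNorm_sq _)
    rw [trE_sub_trE_φ]
    norm_num [Fintype.sum_prod_type, finProdFinEquiv, Complex.normSq_mul, normSq_c2]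
  nlinarith [traceNorm_nonneg (trE (vecMulVec φ₁ (star φ₁)) - trE (vecMulVec φ₂ (star φ₂)))]

lemma traceNorm_trS_sub_trS_φ :
    traceNorm (trS (vecMulVec φ₁ (star φ₁)) - trS (vecMulVec φ₂ (star φ₂))) = 1 / 6 := by
  rw [trS_sub_trS_φ, traceNorm_vecMulVec_self_star]
  norm_num [normSq_c3]

/-- Numerical example 3 (W state): for the W-state-creating unitary with
inputs `σ₁ = |100⟩⟨100|` and `σ₂ = (|100⟩+|011⟩)(⟨100|+⟨011|)/2`, the system
trace distance strictly increases above its input value `1/2` (system channel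
is P-indivisible) while the environment trace distance strictly decreases
below its input value `1/2` (environment channel is P-divisible). -/
theorem w_example_system_P_indivisible_environment_P_divisible
    (σ₁ σ₂ ρ₁ ρ₂ : Matrix ((Fin 2 × Fin 2) × Fin 2) ((Fin 2 × Fin 2) × Fin 2) ℂ)
    (hσ₁ : σ₁ = Matrix.single ((1, 0), 0) ((1, 0), 0) 1)
    (hσ₂ : σ₂ = Matrix.vecMulVec ψvec (star ψvec))
    (hρ₁ : ρ₁ = Wunitary * σ₁ * Wunitaryᴴ)
    (hρ₂ : ρ₂ = Wunitary * σ₂ * Wunitaryᴴ) :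
    ((1 / 2 : ℝ) * traceNorm (trE ρ₁ - trE ρ₂) >
        (1 / 2 : ℝ) * traceNorm (trE σ₁ - trE σ₂) ∧
      (1 / 2 : ℝ) * traceNorm (trE σ₁ - trE σ₂) = 1 / 2) ∧
    ((1 / 2 : ℝ) * traceNorm (trS ρ₁ - trS ρ₂) <
        (1 / 2 : ℝ) * traceNorm (trS σ₁ - trS σ₂) ∧
      (1 / 2 : ℝ) * traceNorm (trS σ₁ - trS σ₂) = 1 / 2) := by
  have hσ₁' : σ₁ = vecMulVec ket100 (star ket100) := hσ₁.trans (single_self_one_eq_vecMulVec _)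
  have hρ₁' : ρ₁ = vecMulVec φ₁ (star φ₁) := by
    rw [hρ₁, hσ₁', mul_vecMulVec_star_mul_conjTranspose, Wunitary_mulVec_ket100]
  have hρ₂' : ρ₂ = vecMulVec φ₂ (star φ₂) := by
    rw [hρ₂, hσ₂, mul_vecMulVec_star_mul_conjTranspose, Wunitary_mulVec_ψvec]
  rw [hσ₁', hσ₂, hρ₁', hρ₂', traceNorm_trE_sub_trE_ket100_ψvec,
    traceNorm_trS_sub_trS_ket100_ψvec, traceNorm_trS_sub_trS_φ]
  have hsystem := one_lt_traceNorm_trE_sub_trE_φ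
  refine ⟨⟨?_, ?_⟩, ?_, ?_⟩ <;> linarith
end
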